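/- There are no balanced super-spiders: for all integers α ≥ 3 and β ≥ 1, the balanced spider T_{α,β} satisfies th₊(T_{α,β}) ≤ th₊(P_{αβ+1}). -/

import Mathlib

open SimpleGraph

/-- `v` PSD-forces `w` given blue set `B`: `v` is blue, adjacent to the white vertex `w`,
and `w` is the only white neighbor of `v` in the component of `G - B` containing `w`. -/
def psdForces {V : Type*} (G : SimpleGraph V) (B : Set V) (v w : V) : Prop :=
  v ∈ B ∧ G.Adj v w ∧ ∃ hw : w ∉ B,
    ∀ (u : V) (hu : u ∉ B), G.Adj v u →
      (G.induce {x | x ∉ B}).Reachable ⟨u, hu⟩ ⟨w, hw⟩ → u = w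

/-- One time-step of PSD forcing: all forceable white vertices become blue simultaneously. -/
def psdStep {V : Type*} (G : SimpleGraph V) (B : Set V) : Set V :=
  B ∪ {w | ∃ v, psdForces G B v w}

/-- `B` is a PSD-forcing set of `G` if iterating the PSD color change rule colors all of `V`. -/
def IsPSDForcing {V : Type*} (G : SimpleGraph V) (B : Set V) : Prop :=
  ∃ t, (psdStep G)^[t] B = Set.univ

/-- The PSD-propagation time of `B` in `G`. -/
noncomputable def psdPt {V : Type*} (G : SimpleGraph V) (B : Set V) : ℕ :=
  sInf {t | (psdStep G)^[t] B = Set.univ}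

/-- The PSD-throttling number of `G`. -/
noncomputable def psdTh {V : Type*} (G : SimpleGraph V) : ℕ :=
  sInf {k | ∃ B : Finset V, IsPSDForcing G ↑B ∧ k = B.card + psdPt G ↑B}

/-- The weighted PSD-throttling number of `(G, w)`. -/
noncomputable def psdThW {V : Type*} (G : SimpleGraph V) (w : V → ℕ) : ℕ :=
  sInf {k | ∃ B : Finset V, IsPSDForcing G ↑B ∧ k = (∑ x ∈ B, w x) + psdPt G ↑B}

/-- The spider `S(l₀, …, l_{k-1})`: a center vertex `none` adjacent to the first vertex
of each of `k` disjoint paths, the `i`-th of order `l i`. -/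
def spider (k : ℕ) (l : Fin k → ℕ) : SimpleGraph (Option ((i : Fin k) × Fin (l i))) :=
  SimpleGraph.fromRel (fun x y =>
    (∃ (i : Fin k) (j : Fin (l i)), (j : ℕ) = 0 ∧ x = none ∧ y = some ⟨i, j⟩) ∨
    (∃ (i : Fin k) (j j' : Fin (l i)), (j' : ℕ) = (j : ℕ) + 1 ∧
      x = some ⟨i, j⟩ ∧ y = some ⟨i, j'⟩))

/-- The balanced spider `T_{α,β}` with `α` legs each of order `β`. -/
abbrev balancedSpider (α β : ℕ) : SimpleGraph (Option ((_ : Fin α) × Fin β)) :=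
  spider α (fun _ => β)


/-!
A PSD-forcing set `B` of the path `P_n` with propagation time `t` only reaches vertices within
distance `t` of `B`, so `n ≤ |B| (2t + 1)`. In a tree every blue vertex forces all of its white
neighbours, so in `T_{α,β}` the centre together with `c` vertices on each leg, spaced `2s + 1`
apart, colours everything within `s` steps as soon as `β ≤ s (2c + 1) + c`, at cost
`1 + αc + s`. It remains to see that `αβ + 1 ≤ k (2t + 1)` always leaves such a choice with
`1 + αc + s ≤ k + t`: writing `k = αc + m` with `1 ≤ m ≤ α`, either `(c, m - 1 + t)` or
`(c + 1, m - 1 + t - α)` works.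
-/

open Finset

namespace SimpleGraph

variable {V W : Type*}

def closedNbhd (G : SimpleGraph V) (X : Set V) : Set V :=
  X ∪ {w | ∃ v ∈ X, G.Adj v w}

lemma closedNbhd_mono (G : SimpleGraph V) : Monotone G.closedNbhd := by
  rintro X Y hXY w (hw | ⟨v, hv, hvw⟩)
  exacts [Or.inl (hXY hw), Or.inr ⟨v, hXY hv, hvw⟩]

lemma subset_iterate_closedNbhd (G : SimpleGraph V) (n : ℕ) (X : Set V) :
    X ⊆ G.closedNbhd^[n] X := by
  induction n with
  | zero => exact subset_rfl
  | succ n ih => exact ih.trans (by rw [Function.iterate_succ_apply']; exact Set.subset_union_left)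

lemma image_iterate_closedNbhd_subset {G : SimpleGraph V} {H : SimpleGraph W} (φ : G →g H)
    (n : ℕ) (X : Set V) : φ '' (G.closedNbhd^[n] X) ⊆ H.closedNbhd^[n] (φ '' X) := by
  refine H.closedNbhd_mono.le_iterate_comp_of_le (h := Set.image φ) ?_ n X
  rintro Y _ ⟨w, hw | ⟨v, hv, hvw⟩, rfl⟩
  exacts [Or.inl ⟨w, hw, rfl⟩, Or.inr ⟨φ v, ⟨v, hv, rfl⟩, φ.map_adj hvw⟩]

lemma mem_iterate_closedNbhd_pathGraph {n d : ℕ} {X : Set (Fin n)} {x : Fin n} :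
    x ∈ (pathGraph n).closedNbhd^[d] X ↔
      ∃ b ∈ X, (x : ℕ) ≤ b + d ∧ (b : ℕ) ≤ x + d := by
  induction d generalizing x with
  | zero => exact ⟨fun hx => ⟨x, hx, le_rfl, le_rfl⟩, fun ⟨b, hb, h₁, h₂⟩ => by
      rwa [show x = b from Fin.ext (by omega)]⟩
  | succ d ih =>
    rw [Function.iterate_succ_apply']
    constructor
    · rintro (hx | ⟨v, hv, hvx⟩)
      · obtain ⟨b, hb, h₁, h₂⟩ := ih.1 hx
        exact ⟨b, hb, by omega, by omega⟩
      · obtain ⟨b, hb, h₁, h₂⟩ := ih.1 hv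
        have := pathGraph_adj.1 hvx
        exact ⟨b, hb, by omega, by omega⟩
    · rintro ⟨b, hb, h₁, h₂⟩
      by_cases hxb : (x : ℕ) ≤ b + d ∧ (b : ℕ) ≤ x + d
      · exact Or.inl (ih.2 ⟨b, hb, hxb⟩)
      · obtain ⟨v, hv⟩ : ∃ v : Fin n, (v : ℕ) + 1 = x ∧ (x : ℕ) = b + d + 1 ∨
            (x : ℕ) + 1 = v ∧ (b : ℕ) = x + d + 1 := by
          rcases Nat.lt_or_ge (b : ℕ) x with hbx | hxb'
          · exact ⟨⟨x - 1, by omega⟩, Or.inl ⟨by dsimp only; omega, by omega⟩⟩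
          · exact ⟨⟨x + 1, by omega⟩, Or.inr ⟨rfl, by omega⟩⟩
        exact Or.inr ⟨v, ih.2 ⟨b, hb, by omega, by omega⟩, pathGraph_adj.2 (by omega)⟩

lemma isAcyclic_of_rank_parent {G : SimpleGraph V} (r : V → ℕ) (p : V → V)
    (hr : ∀ ⦃x y⦄, G.Adj x y → r x ≠ r y)
    (hp : ∀ ⦃x y⦄, G.Adj x y → r x < r y → x = p y) :
    G.IsAcyclic := by
  classical
  intro v c hc
  obtain ⟨u, hu, hmax⟩ := c.support.toFinset.exists_max_image r ⟨v, by simp⟩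
  rw [List.mem_toFinset] at hu
  have hc' := (c.isCycle_rotate hu).2 hc
  have hlt : ∀ x, G.Adj u x → x ∈ (c.rotate u hu).support → r x < r u := fun x hux hx =>
    lt_of_le_of_ne (hmax x (by simpa [Walk.mem_support_rotate_iff] using hx)) (hr hux).symm
  have hnil := hc'.not_nil
  have h₁ := hp (Walk.adj_snd hnil).symm
    (hlt _ (Walk.adj_snd hnil) (Walk.getVert_mem_support _ _))
  have h₂ := hp (Walk.adj_penultimate hnil)
    (hlt _ (Walk.adj_penultimate hnil).symm (Walk.getVert_mem_support _ _))
  exact hc'.snd_ne_penultimate (h₁.trans h₂.symm)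

end SimpleGraph

section PSD

variable {V : Type*}

lemma psdStep_subset_closedNbhd (G : SimpleGraph V) (B : Set V) :
    psdStep G B ⊆ G.closedNbhd B := by
  rintro w (hw | ⟨v, hv, hvw, -⟩)
  exacts [Or.inl hw, Or.inr ⟨v, hv, hvw⟩]

lemma iterate_psdStep_subset (G : SimpleGraph V) (n : ℕ) (B : Set V) :
    (psdStep G)^[n] B ⊆ G.closedNbhd^[n] B :=
  G.closedNbhd_mono.le_iterate_of_le (psdStep_subset_closedNbhd G) n B

lemma SimpleGraph.IsAcyclic.psdForces {G : SimpleGraph V} (hG : G.IsAcyclic) {B : Set V}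
    {v w : V} (hv : v ∈ B) (hvw : G.Adj v w) (hw : w ∉ B) : psdForces G B v w := by
  classical
  refine ⟨hv, hvw, hw, fun u hu hvu ⟨q⟩ => ?_⟩
  let q' : G.Walk u w := q.map (Embedding.induce _).toHom
  have hvq : v ∉ q'.bypass.support := fun h => by
    obtain ⟨x, -, rfl⟩ :=
      List.mem_map.1 (Walk.support_map _ _ ▸ q'.support_bypass_subset_support h)
    exact x.2 hv
  have hpath : (Walk.cons hvu.symm Walk.nil : G.Walk u v).IsPath := by
    simpa using (G.ne_of_adj hvu).symm
  have := hG.mem_support_of_ne_mem_support_of_adj_of_isPath hpath q'.bypass_isPath hvw hvq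
  simp only [Walk.support_cons, Walk.support_nil, List.mem_cons, List.not_mem_nil, or_false] at this
  exact this.resolve_right (G.ne_of_adj hvw).symm |>.symm

lemma SimpleGraph.IsAcyclic.psdStep_eq {G : SimpleGraph V} (hG : G.IsAcyclic) :
    psdStep G = G.closedNbhd := by
  ext B w
  refine ⟨fun h => psdStep_subset_closedNbhd G B h, ?_⟩
  rintro (hw | ⟨v, hv, hvw⟩)
  · exact Or.inl hw
  · by_cases hwB : w ∈ B
    exacts [Or.inl hwB, Or.inr ⟨v, hG.psdForces hv hvw hwB⟩]

lemma IsPSDForcing.iterate_psdPt {G : SimpleGraph V} {B : Set V} (h : IsPSDForcing G B) :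
    (psdStep G)^[psdPt G B] B = Set.univ :=
  Nat.sInf_mem h

lemma psdTh_le_of_iterate_eq_univ {G : SimpleGraph V} (B : Finset V) {t : ℕ}
    (h : (psdStep G)^[t] B = Set.univ) : psdTh G ≤ B.card + t := by
  have hth : psdTh G ≤ B.card + psdPt G B := Nat.sInf_le ⟨B, ⟨t, h⟩, rfl⟩
  have hpt : psdPt G B ≤ t := Nat.sInf_le h
  omega

lemma exists_psdTh_eq [Fintype V] (G : SimpleGraph V) :
    ∃ B : Finset V, IsPSDForcing G B ∧ psdTh G = B.card + psdPt G B :=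
  Nat.sInf_mem (s := {k | ∃ B : Finset V, IsPSDForcing G B ∧ k = B.card + psdPt G B})
    ⟨_, Finset.univ, ⟨0, by simp⟩, rfl⟩

end PSD

lemma card_filter_fin_near_le (n t : ℕ) (b : Fin n) :
    #{x : Fin n | (x : ℕ) ≤ b + t ∧ (b : ℕ) ≤ x + t} ≤ 2 * t + 1 := by
  calc #{x : Fin n | (x : ℕ) ≤ b + t ∧ (b : ℕ) ≤ x + t}
      ≤ #(Finset.Icc ((b : ℕ) - t) (b + t)) := by
        refine Finset.card_le_card_of_injOn Fin.val (fun x hx => ?_) Fin.val_injective.injOn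
        simp only [coe_filter, mem_univ, true_and, Set.mem_ofPred_eq, coe_Icc, Set.mem_Icc,
          tsub_le_iff_right] at hx ⊢
        omega
    _ ≤ 2 * t + 1 := by simp only [Nat.card_Icc]; omega

lemma card_le_of_iterate_psdStep_pathGraph_eq_univ {n t : ℕ} (B : Finset (Fin n))
    (h : (psdStep (pathGraph n))^[t] B = Set.univ) : n ≤ #B * (2 * t + 1) := by
  have hcover : (Finset.univ : Finset (Fin n)) ⊆
      B.biUnion fun b => {x : Fin n | (x : ℕ) ≤ b + t ∧ (b : ℕ) ≤ x + t} := fun x _ => by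
    have hx : x ∈ (psdStep (pathGraph n))^[t] B := by rw [h]; trivial
    obtain ⟨b, hb, hxb⟩ := mem_iterate_closedNbhd_pathGraph.1 (iterate_psdStep_subset _ t _ hx)
    exact Finset.mem_biUnion.2 ⟨b, hb, by simpa using hxb⟩
  calc n = #(Finset.univ : Finset (Fin n)) := (Finset.card_fin n).symm
    _ ≤ _ := Finset.card_le_card hcover
    _ ≤ #B * (2 * t + 1) :=
      Finset.card_biUnion_le_card_mul _ _ _ fun b _ => card_filter_fin_near_le n t b

lemma le_or_exists_near_mul {β c s x : ℕ} (hβ : β ≤ s * (2 * c + 1) + c) (hx : x ≤ β) :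
    x ≤ s ∨ ∃ m < c, x ≤ min ((m + 1) * (2 * s + 1)) β + s ∧
      min ((m + 1) * (2 * s + 1)) β ≤ x + s := by
  refine or_iff_not_imp_left.2 fun hxs => ⟨(x - s - 1) / (2 * s + 1), ?_, ?_⟩
  · rw [Nat.div_lt_iff_lt_mul (by omega)]
    have : s * (2 * c + 1) + c = c * (2 * s + 1) + s := by ring
    omega
  · have hdiv := Nat.div_add_mod (x - s - 1) (2 * s + 1)
    have hmod := Nat.mod_lt (x - s - 1) (show 2 * s + 1 > 0 by omega)
    have : ((x - s - 1) / (2 * s + 1) + 1) * (2 * s + 1) =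
      (2 * s + 1) * ((x - s - 1) / (2 * s + 1)) + (2 * s + 1) := by ring
    omega

section BalancedSpider

variable {α β : ℕ}

def spiderLeg (i : Fin α) : Fin (β + 1) → Option ((_ : Fin α) × Fin β) :=
  Fin.cases none fun j => some ⟨i, j⟩

@[simp] lemma spiderLeg_zero (i : Fin α) : spiderLeg (β := β) i 0 = none := rfl

@[simp] lemma spiderLeg_succ (i : Fin α) (j : Fin β) : spiderLeg i j.succ = some ⟨i, j⟩ := rfl

lemma balancedSpider_adj_spiderLeg (i : Fin α) (j : Fin β) :
    (balancedSpider α β).Adj (spiderLeg i j.castSucc) (some ⟨i, j⟩) := by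
  rw [balancedSpider, spider, fromRel_adj]
  obtain ⟨_ | k, hk⟩ := j
  · exact ⟨by simp, Or.inl (Or.inl ⟨i, ⟨0, hk⟩, rfl, rfl, rfl⟩)⟩
  · have : (Fin.castSucc ⟨k + 1, hk⟩ : Fin (β + 1)) = Fin.succ ⟨k, by omega⟩ := rfl
    rw [this, spiderLeg_succ]
    exact ⟨by simp, Or.inl (Or.inr ⟨i, ⟨k, by omega⟩, ⟨k + 1, hk⟩, rfl, rfl, rfl⟩)⟩

def spiderLegHom (i : Fin α) : pathGraph (β + 1) →g balancedSpider α β where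
  toFun := spiderLeg i
  map_rel' {x y} h := by
    rcases pathGraph_adj.1 h with h | h
    · obtain ⟨j, rfl, rfl⟩ : ∃ j : Fin β, x = j.castSucc ∧ y = j.succ :=
        ⟨⟨x, by omega⟩, rfl, Fin.ext (by simp only [Fin.succ_mk]; omega)⟩
      exact balancedSpider_adj_spiderLeg i j
    · obtain ⟨j, rfl, rfl⟩ : ∃ j : Fin β, y = j.castSucc ∧ x = j.succ :=
        ⟨⟨y, by omega⟩, rfl, Fin.ext (by simp only [Fin.succ_mk]; omega)⟩
      exact (balancedSpider_adj_spiderLeg i j).symm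

lemma balancedSpider_isAcyclic : (balancedSpider α β).IsAcyclic := by
  let r : Option ((_ : Fin α) × Fin β) → ℕ := fun x => x.elim 0 fun v => v.2 + 1
  let p : Option ((_ : Fin α) × Fin β) → Option ((_ : Fin α) × Fin β) :=
    fun x => x.elim none fun v => spiderLeg v.1 v.2.castSucc
  have hrel : ∀ x y : Option ((_ : Fin α) × Fin β),
      ((∃ (i : Fin α) (j : Fin β), (j : ℕ) = 0 ∧ x = none ∧ y = some ⟨i, j⟩) ∨
        (∃ (i : Fin α) (j j' : Fin β), (j' : ℕ) = j + 1 ∧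
          x = some ⟨i, j⟩ ∧ y = some ⟨i, j'⟩)) →
      r x + 1 = r y ∧ x = p y := by
    rintro x y (⟨i, j, hj, rfl, rfl⟩ | ⟨i, j, j', hj, rfl, rfl⟩)
    · refine ⟨by simp [r, hj], ?_⟩
      show none = spiderLeg i j.castSucc
      rw [show j.castSucc = 0 from Fin.ext hj, spiderLeg_zero]
    · refine ⟨by simp [r, hj], ?_⟩
      show some ⟨i, j⟩ = spiderLeg i j'.castSucc
      rw [show j'.castSucc = j.succ from Fin.ext hj, spiderLeg_succ]
  have hedge : ∀ ⦃x y⦄, (balancedSpider α β).Adj x y →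
      (r x + 1 = r y ∧ x = p y) ∨ (r y + 1 = r x ∧ y = p x) := by
    intro x y h
    rw [balancedSpider, spider, fromRel_adj] at h
    exact h.2.imp (hrel x y) (hrel y x)
  refine isAcyclic_of_rank_parent r p (fun x y h => ?_) (fun x y h hxy => ?_)
  · rcases hedge h with ⟨h, -⟩ | ⟨h, -⟩ <;> omega
  · rcases hedge h with ⟨-, h⟩ | ⟨h, -⟩
    exacts [h, by omega]


lemma psdTh_balancedSpider_le (c s : ℕ) (h : β ≤ s * (2 * c + 1) + c) :
    psdTh (balancedSpider α β) ≤ 1 + α * c + s := by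
  classical
  let pos : Fin c → Fin (β + 1) := fun m => ⟨min ((m + 1) * (2 * s + 1)) β, by omega⟩
  let B : Finset (Option ((_ : Fin α) × Fin β)) :=
    insert none (univ.image fun q : Fin α × Fin c => spiderLeg q.1 (pos q.2))
  have hcard : #B ≤ 1 + α * c := by
    refine (card_insert_le _ _).trans ?_
    have := card_image_le (s := (univ : Finset (Fin α × Fin c)))
      (f := fun q => spiderLeg q.1 (pos q.2))
    simp only [card_univ, Fintype.card_prod, Fintype.card_fin] at this
    omega
  have hcover : (psdStep (balancedSpider α β))^[s] B = Set.univ := by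
    rw [balancedSpider_isAcyclic.psdStep_eq, Set.eq_univ_iff_forall]
    rintro (_ | ⟨i, j⟩)
    · exact subset_iterate_closedNbhd _ _ _ (by simp [B])
    · have hleg : spiderLeg i '' ((pathGraph (β + 1)).closedNbhd^[s] (spiderLeg i ⁻¹' B)) ⊆
          (balancedSpider α β).closedNbhd^[s] B :=
        (image_iterate_closedNbhd_subset (spiderLegHom i) s _).trans
          (((closedNbhd_mono _).iterate s) (Set.image_preimage_subset _ _))
      refine hleg ⟨j.succ, mem_iterate_closedNbhd_pathGraph.2 ?_, rfl⟩
      rcases le_or_exists_near_mul h j.succ.is_le with hj | ⟨m, hm, hjm⟩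
      · exact ⟨0, by simp [B], by simpa using hj, by simp⟩
      · exact ⟨pos ⟨m, hm⟩, by simp [B], hjm⟩
  exact (psdTh_le_of_iterate_eq_univ B hcover).trans (by omega)

end BalancedSpider

lemma budget_poly_nonneg (a m : ℤ) (ha : 3 ≤ a) (hma : m ≤ a) (h2m : a + 1 ≤ 2 * m) :
    0 ≤ a * (a - 2) * ((a - 1) * m + 1) +
      (2 * m - a) *
        ((m - 1) * (3 * a * m - a - 3 * a ^ 2 - m) + (a + 1 - m) * ((a - 1) * m + 1)) := by
  obtain ⟨u, rfl⟩ : ∃ u, m = a - u := ⟨a - m, by ring⟩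
  have hu : 0 ≤ u := by linarith
  have hv : 0 ≤ a - 1 - 2 * u := by linarith
  have ha' : 0 ≤ a - 3 := by linarith
  nlinarith [mul_nonneg hu hv, mul_nonneg (mul_nonneg hu hv) ha', mul_nonneg (mul_nonneg hu hu) hv,
    mul_nonneg (mul_nonneg hu hv) hv, mul_nonneg (mul_nonneg ha' ha') ha', mul_nonneg ha' hv,
    mul_nonneg (mul_nonneg hv hv) hv, mul_nonneg (mul_nonneg ha' hv) hv,
    mul_nonneg (mul_nonneg ha' ha') hv, mul_nonneg (mul_nonneg ha' ha') hu,
    mul_nonneg (mul_nonneg ha' hu) hu]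

lemma spider_budget_succ_of_lt (a b c m t : ℤ) (ha : 3 ≤ a) (hm : 1 ≤ m) (hma : m ≤ a)
    (hc : 0 ≤ c) (ht : 0 ≤ t) (hb : a * b + 1 ≤ (a * c + m) * (2 * t + 1))
    (hlt : (m - 1 + t) * (2 * c + 1) + c < b) :
    a ≤ m - 1 + t ∧ b ≤ (m - 1 + t - a) * (2 * (c + 1) + 1) + (c + 1) := by
  have hacm : 0 ≤ 2 * a * c * (m - 1) := by
    have := mul_nonneg (mul_nonneg (by linarith : (0 : ℤ) ≤ 2 * a) hc) (sub_nonneg.2 hm)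
    linarith
  have hS : 2 * a * c * (m - 1) ≤ 2 * m * t + m - a * m - a * t - 1 := by
    have := mul_le_mul_of_nonneg_left (Int.add_one_le_iff.2 hlt) (by linarith : (0 : ℤ) ≤ a)
    linear_combination hb + this
  have hT : (a - 1) * m + 1 ≤ t * (2 * m - a) := by linear_combination hS + hacm
  have hm2 : 2 ≤ m := by nlinarith
  have h2m : a + 1 ≤ 2 * m := by nlinarith
  refine ⟨by nlinarith [sq_nonneg (a - m), sq_nonneg (m - 1)], ?_⟩
  set D := a * ((m - 1 + t - a) * (2 * c + 3) + c + 2) - (a * c + m) * (2 * t + 1)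
  set C := (m - 1) * (3 * a * m - a - 3 * a ^ 2 - m) + (a + 1 - m) * ((a - 1) * m + 1)
  -- `hS` bounds `c` and `hT` bounds `t`; eliminating both leaves `budget_poly_nonneg`.
  have h₁ : a * (a - 2) * t + C ≤ (m - 1) * D := by
    nlinarith [mul_le_mul_of_nonneg_left hS (by linarith : (0 : ℤ) ≤ a + 1 - m)]
  have h₂ : a * (a - 2) * ((a - 1) * m + 1) + (2 * m - a) * C ≤
      (2 * m - a) * (a * (a - 2) * t + C) := by
    nlinarith [mul_le_mul_of_nonneg_left hT (by nlinarith : (0 : ℤ) ≤ a * (a - 2))]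
  have hD : 0 ≤ D := by
    have := budget_poly_nonneg a m ha hma h2m
    have : 0 ≤ (2 * m - a) * ((m - 1) * D) := by
      nlinarith [mul_le_mul_of_nonneg_left h₁ (by linarith : (0 : ℤ) ≤ 2 * m - a)]
    exact nonneg_of_mul_nonneg_right (nonneg_of_mul_nonneg_right this (by linarith)) (by linarith)
  nlinarith

lemma exists_spider_budget {a b k t : ℕ} (ha : 3 ≤ a) (h : a * b + 1 ≤ k * (2 * t + 1)) :
    ∃ c s, b ≤ s * (2 * c + 1) + c ∧ 1 + a * c + s ≤ k + t := by
  obtain ⟨c, m, rfl, hm, hma⟩ : ∃ c m, k = a * c + m ∧ 1 ≤ m ∧ m ≤ a := by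
    have hk : k ≠ 0 := by rintro rfl; omega
    exact ⟨(k - 1) / a, (k - 1) % a + 1, by have := Nat.div_add_mod (k - 1) a; omega, by omega,
      Nat.mod_lt _ (by omega)⟩
  by_cases hle : b ≤ (m - 1 + t) * (2 * c + 1) + c
  · exact ⟨c, m - 1 + t, hle, by omega⟩
  · rw [not_le] at hle
    zify [hm] at h hle
    obtain ⟨hat, hb⟩ := spider_budget_succ_of_lt a b c m t (by exact_mod_cast ha)
      (by exact_mod_cast hm) (by exact_mod_cast hma) (by positivity) (by positivity) h hle
    refine ⟨c + 1, m - 1 + t - a, ?_, by rw [mul_add]; omega⟩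
    zify [hm, show a ≤ m - 1 + t by omega]
    exact hb

theorem stmt19_general (α β : ℕ) (hα : 3 ≤ α) :
    psdTh (balancedSpider α β) ≤ psdTh (SimpleGraph.pathGraph (α * β + 1)) := by
  obtain ⟨B, hB, hth⟩ := exists_psdTh_eq (pathGraph (α * β + 1))
  obtain ⟨c, s, hcover, hcost⟩ := exists_spider_budget hα
    (card_le_of_iterate_psdStep_pathGraph_eq_univ B hB.iterate_psdPt)
  calc psdTh (balancedSpider α β) ≤ 1 + α * c + s := psdTh_balancedSpider_le c s hcover
    _ ≤ #B + psdPt (pathGraph (α * β + 1)) B := hcost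
    _ = psdTh (pathGraph (α * β + 1)) := hth.symm

/-- There are no balanced super-spiders: for all integers `α ≥ 3` and `β ≥ 1`,
`th₊(T_{α,β}) ≤ th₊(P_{αβ+1})`. -/
theorem stmt19 (α β : ℕ) (hα : 3 ≤ α) (hβ : 1 ≤ β) :
    psdTh (balancedSpider α β) ≤ psdTh (SimpleGraph.pathGraph (α * β + 1)) :=
  stmt19_general α β hα
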